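/- arXiv:1807.11914 — 5 statements merged into one kernel-verified Lean document; each statement's English description precedes it below -/
import Mathlib

section
/- In the clique-reduction SPG: if G = (V,E) is an undirected graph with |V| = r and C ⊆ V is a clique of size J with 1 ≤ J < r, then under the leader strategy s_n assigning probability 1/J to each action a_n^i with v_i ∈ C (and 0 elsewhere), for every follower p with v_p ∈ C, playing a_1 yields expected utility r/J > 1 while playing a_0 yields expected utility exactly 1; hence a_1 is the unique best response of each such follower, and the leader's utility equals J. -/
/-- The leader strategy that plays each action corresponding to a clique vertex
with probability `1/J`. -/
noncomputable def cliqueStrat {r : ℕ} (J : ℕ) (C : Finset (Fin r)) : Fin r → ℝ :=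
  fun i => if i ∈ C then 1 / (J : ℝ) else 0

/-- Expected utility of follower `p` playing `a_1` against leader strategy `s`:
payoff `r` on `a_n^p` and `0` elsewhere. -/
def utilA1 {r : ℕ} (s : Fin r → ℝ) (p : Fin r) : ℝ :=
  ∑ i, s i * (if i = p then (r : ℝ) else 0)

/-- Expected utility of follower `p` playing `a_0` against leader strategy `s`:
payoff `1` on neighbours and `1 + r²` on non-neighbours. -/
def utilA0 {r : ℕ} (E : Fin r → Fin r → Prop) [∀ p i, Decidable (E p i)]
    (s : Fin r → ℝ) (p : Fin r) : ℝ :=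
  ∑ i, s i * (if E p i then (1 : ℝ) else 1 + (r : ℝ) ^ 2)

/-- Clique reduction, YES direction: under the uniform strategy on a clique `C`
of size `J` with `1 ≤ J < r`, every follower in `C` gets `r/J > 1` from `a_1`
and exactly `1` from `a_0`, so `a_1` is her unique best response, and the leader's
utility (the number of followers strictly preferring `a_1`) equals `J`. -/
theorem stmt_6 (r J : ℕ) (E : Fin r → Fin r → Prop) [∀ p i, Decidable (E p i)]
    (hsymm : ∀ p i, E p i → E i p) (hrefl : ∀ p, E p p)
    (C : Finset (Fin r))
    (hclique : ∀ p ∈ C, ∀ i ∈ C, E p i)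
    (hJ : C.card = J) (hJ1 : 1 ≤ J) (hJr : J < r) :
    (∀ p ∈ C,
      utilA1 (cliqueStrat J C) p = (r : ℝ) / (J : ℝ) ∧
      (1 : ℝ) < (r : ℝ) / (J : ℝ) ∧
      utilA0 E (cliqueStrat J C) p = 1 ∧
      utilA0 E (cliqueStrat J C) p < utilA1 (cliqueStrat J C) p) ∧
    (Finset.univ.filter
      (fun p : Fin r =>
        utilA0 E (cliqueStrat J C) p < utilA1 (cliqueStrat J C) p)).card = J := by
  have hJ0 : (0 : ℝ) < (J : ℝ) := by exact_mod_cast hJ1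
  have hA1 : ∀ p : Fin r, utilA1 (cliqueStrat J C) p = cliqueStrat J C p * r := by
    intro p
    unfold utilA1
    rw [Finset.sum_eq_single p]
    · simp
    · intro b _ hb; simp [hb]
    · simp
  have hA0 : ∀ p : Fin r, utilA0 E (cliqueStrat J C) p
      = ∑ i ∈ C, (1 / (J : ℝ)) * (if E p i then (1 : ℝ) else 1 + (r : ℝ) ^ 2) := by
    intro p
    unfold utilA0 cliqueStrat
    simp only [ite_mul, zero_mul]
    rw [Finset.sum_ite_mem, Finset.univ_inter]
  have hA0C : ∀ p ∈ C, utilA0 E (cliqueStrat J C) p = 1 := by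
    intro p hp
    rw [hA0, Finset.sum_congr rfl (fun i hi => by
      rw [if_pos (hclique p hp i hi), mul_one])]
    rw [Finset.sum_const, hJ, nsmul_eq_mul]
    field_simp
  have hA0ge : ∀ p : Fin r, (1:ℝ) ≤ utilA0 E (cliqueStrat J C) p := by
    intro p
    rw [hA0]
    calc (1:ℝ) = ∑ _i ∈ C, (1 / (J:ℝ)) := by
          rw [Finset.sum_const, hJ, nsmul_eq_mul]; field_simp
    _ ≤ _ := by
        refine Finset.sum_le_sum fun i hi => ?_
        have h1 : (1:ℝ) ≤ (if E p i then (1 : ℝ) else 1 + (r : ℝ) ^ 2) := by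
          split
          · exact le_rfl
          · nlinarith [sq_nonneg (r:ℝ)]
        nlinarith [one_div_pos.mpr hJ0]
  have hrJ : (1:ℝ) < (r:ℝ)/(J:ℝ) := by
    rw [lt_div_iff₀ hJ0]
    have : (J:ℝ) < r := by exact_mod_cast hJr
    linarith
  have key : ∀ p ∈ C,
      utilA1 (cliqueStrat J C) p = (r : ℝ) / (J : ℝ) ∧
      (1 : ℝ) < (r : ℝ) / (J : ℝ) ∧
      utilA0 E (cliqueStrat J C) p = 1 ∧
      utilA0 E (cliqueStrat J C) p < utilA1 (cliqueStrat J C) p := by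
    intro p hp
    have h1 : utilA1 (cliqueStrat J C) p = (r:ℝ)/(J:ℝ) := by
      rw [hA1]; simp [cliqueStrat, hp]; ring
    exact ⟨h1, hrJ, hA0C p hp, by rw [h1, hA0C p hp]; exact hrJ⟩
  refine ⟨key, ?_⟩
  have hfilt : (Finset.univ.filter
      (fun p : Fin r =>
        utilA0 E (cliqueStrat J C) p < utilA1 (cliqueStrat J C) p)) = C := by
    ext p
    simp only [Finset.mem_filter, Finset.mem_univ, true_and]
    constructor
    · intro h
      by_contra hp
      have h1 : utilA1 (cliqueStrat J C) p = 0 := by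
        rw [hA1]; simp [cliqueStrat, hp]
      have h2 := hA0ge p
      rw [h1] at h
      linarith
    · intro hp; exact (key p hp).2.2.2
  rw [hfilt, hJ]
end

section
/- In the clique-reduction SPG: if for some leader mixed strategy s_n the set C = { v_p : a_1 is a best response of follower p to s_n } has size J, then (i) s_n(a_n^p) ≥ 1/r for every v_p ∈ C, and (ii) for all distinct v_p, v_i ∈ C, (v_p, v_i) ∈ E; hence C is a clique of G of size J. -/
/-- Clique reduction, converse direction: if `C` is the set of followers for which
`a_1` is a best response to the leader strategy `s`, and `|C| = J`, then every
`p ∈ C` gets probability at least `1/r`, and `C` is a clique of size `J`. -/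
theorem stmt_7 (r J : ℕ) (hr : 2 ≤ r)
    (E : Fin r → Fin r → Prop) [∀ p i, Decidable (E p i)]
    (hsymm : ∀ p i, E p i → E i p) (hrefl : ∀ p, E p p)
    (s : Fin r → ℝ) (hs : s ∈ stdSimplex ℝ (Fin r))
    (C : Finset (Fin r))
    (hC : ∀ p : Fin r, p ∈ C ↔
      (r : ℝ) * s p ≥ ∑ i, s i * (1 + (r : ℝ) ^ 2 * (if E p i then 0 else 1)))
    (hcard : C.card = J) :
    (∀ p ∈ C, s p ≥ 1 / (r : ℝ)) ∧
    (∀ p ∈ C, ∀ i ∈ C, p ≠ i → E p i) := by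
  obtain ⟨hnn, hsum⟩ := hs
  have hr0 : (0:ℝ) < r := by positivity
  have hterm : ∀ p i : Fin r, s i ≤ s i * (1 + (r : ℝ) ^ 2 * (if E p i then 0 else 1)) := by
    intro p i
    have h1 : (1:ℝ) ≤ 1 + (r:ℝ)^2 * (if E p i then 0 else 1) := by
      have : (0:ℝ) ≤ (r:ℝ)^2 * (if E p i then 0 else 1) := by positivity
      linarith
    nlinarith [hnn i]
  have hlow : ∀ p ∈ C, (1:ℝ) ≤ (r:ℝ) * s p := by
    intro p hp
    have h := (hC p).mp hp
    have h2 : (1:ℝ) ≤ ∑ i, s i * (1 + (r : ℝ) ^ 2 * (if E p i then 0 else 1)) := by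
      have h3 : ∑ i, s i ≤ ∑ i, s i * (1 + (r : ℝ) ^ 2 * (if E p i then 0 else 1)) :=
        Finset.sum_le_sum fun i _ => hterm p i
      rw [hsum] at h3
      exact h3
    linarith
  constructor
  · intro p hp
    have := hlow p hp
    rw [ge_iff_le, div_le_iff₀ hr0]
    linarith
  · intro p hp i hi hne
    by_contra hE
    have h := (hC p).mp hp
    have hsi : 1/(r:ℝ) ≤ s i := by
      have := hlow i hi
      rw [div_le_iff₀ hr0]; linarith
    -- RHS ≥ 1 + r² * s i ≥ 1 + r
    have hbig : (1:ℝ) + r ≤ ∑ j, s j * (1 + (r : ℝ) ^ 2 * (if E p j then 0 else 1)) := by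
      have hsplit : ∑ j, s j * (1 + (r : ℝ) ^ 2 * (if E p j then 0 else 1)) =
          s i * (1 + (r : ℝ) ^ 2 * (if E p i then 0 else 1)) +
          ∑ j ∈ Finset.univ.erase i, s j * (1 + (r : ℝ) ^ 2 * (if E p j then 0 else 1)) := by
        exact (Finset.add_sum_erase _ _ (Finset.mem_univ i)).symm
      have hrest : ∑ j ∈ Finset.univ.erase i, s j ≤
          ∑ j ∈ Finset.univ.erase i, s j * (1 + (r : ℝ) ^ 2 * (if E p j then 0 else 1)) :=
        Finset.sum_le_sum fun j _ => hterm p j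
      have hrest0 : (1:ℝ) - s i = ∑ j ∈ Finset.univ.erase i, s j := by
        have := Finset.add_sum_erase Finset.univ s (Finset.mem_univ i)
        rw [hsum] at this; linarith
      have hi' : s i * (1 + (r : ℝ) ^ 2 * (if E p i then 0 else 1)) = s i * (1 + (r:ℝ)^2) := by
        rw [if_neg hE]; ring_nf
      rw [hsplit, hi']
      have : (1:ℝ) + r ≤ s i * (1 + (r:ℝ)^2) + (1 - s i) := by
        have h1 : (r:ℝ) ≤ (r:ℝ)^2 * s i := by
          have : (r:ℝ)^2 * (1/(r:ℝ)) ≤ (r:ℝ)^2 * s i :=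
            mul_le_mul_of_nonneg_left hsi (by positivity)
          have heq : (r:ℝ)^2 * (1/(r:ℝ)) = r := by field_simp
          linarith
        nlinarith
      linarith [hrest, hrest0.symm ▸ hrest]
    have hsp1 : s p ≤ 1 := by
      have := Finset.single_le_sum (f := s) (fun j _ => hnn j) (Finset.mem_univ p)
      linarith [hsum ▸ this]
    have : (r:ℝ) * s p ≤ r := by nlinarith
    linarith [h]
end

section
/- In the 3-SAT reduction PG for the optimistic case, Lemma 1 holds: for any leader mixed strategy s_n over A_n = {a_{v_1},...,a_{v_r}, a_w} with s_n(a_v) ≠ 1/(r+1) for all v, there exists an action a_i ∈ {a_1, a_2, a_3} of follower p (corresponding to clause φ_p = l_1 ∨ l_2 ∨ l_3) whose expected utility against s_n strictly exceeds 1 if and only if φ_p evaluates to true under the truth assignment T^{s_n} defined by T^{s_n}(v) = 1 iff s_n(a_v) > 1/(r+1). -/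
/-- Lemma 1 of the optimistic 3-SAT reduction: for a leader strategy `s` over the
`r + 1` actions `a_{v_1}, ..., a_{v_r}, a_w` (with `none` playing the role of
`a_w`) avoiding the threshold `1/(r+1)`, some action `a_i` of the follower
corresponding to the clause with literals `l 0, l 1, l 2` (each a pair of a
variable and a sign, `true` meaning positive) has expected utility strictly
greater than `1` iff the clause is true under the assignment `T^{s}` defined by
`T^{s}(v) = 1` iff `s(a_v) > 1/(r+1)`. -/
theorem stmt_8 (r : ℕ) (hr : 1 ≤ r) (l : Fin 3 → Fin r × Bool)
    (s : Option (Fin r) → ℝ) (hs : s ∈ stdSimplex ℝ (Option (Fin r)))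
    (hne : ∀ v : Fin r, s (some v) ≠ 1 / ((r : ℝ) + 1)) :
    (∃ i : Fin 3,
      (if (l i).2 = true then s (some (l i).1) * ((r : ℝ) + 1)
       else (1 - s (some (l i).1)) * (((r : ℝ) + 1) / (r : ℝ))) > 1)
    ↔
    (∃ i : Fin 3,
      if (l i).2 = true then s (some (l i).1) > 1 / ((r : ℝ) + 1)
      else ¬ (s (some (l i).1) > 1 / ((r : ℝ) + 1))) := by
  have hr0 : (0:ℝ) < (r:ℝ) := by exact_mod_cast hr
  have hr1 : (0:ℝ) < (r:ℝ) + 1 := by linarith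
  have hd : ((r:ℝ)+1)/(r:ℝ) * (r:ℝ) = (r:ℝ)+1 := div_mul_cancel₀ _ hr0.ne'
  apply exists_congr
  intro i
  set x := s (some (l i).1) with hx
  have hnex : x ≠ 1 / ((r:ℝ) + 1) := hne _
  have hth : ∀ y : ℝ, y > 1/((r:ℝ)+1) ↔ 1 < y * ((r:ℝ)+1) := by
    intro y; rw [gt_iff_lt, div_lt_iff₀ hr1]
  split_ifs with h
  · rw [hth]
  · rw [not_lt]
    have hle : x ≤ 1/((r:ℝ)+1) ↔ x < 1/((r:ℝ)+1) :=
      ⟨fun h' => lt_of_le_of_ne h' hnex, le_of_lt⟩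
    rw [hle, lt_div_iff₀ hr1, gt_iff_lt, mul_div_assoc', lt_div_iff₀ hr0]
    constructor <;> intro hlt <;> nlinarith
end

section
/- In the 3-SAT reduction PG for the NO-instance argument: for s ≥ 3 clauses and r ≥ 1 variables, the all-a_0 profile is a Nash equilibrium of the followers' game regardless of the leader's strategy; specifically, each follower gets (s−1)·(r+1) by playing a_0 when all others play a_0, while any deviation to an action a_p ≠ a_0 yields at most r+1 < (s−1)·(r+1). -/
/-- Payoff of follower `p` against follower `q` in the optimistic 3-SAT reduction
(`none` plays the role of action `a_0`, `some a` of the other actions):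
`(a_0, a_0) ↦ r + 1`, `(a_0, a_q ≠ a_0) ↦ 1/(s-1)`, and `0` whenever `p` plays a
non-`a_0` action. -/
noncomputable def pairPay (s r : ℕ) {β : Type} : Option β → Option β → ℝ
  | none, none => (r : ℝ) + 1
  | none, some _ => 1 / ((s : ℝ) - 1)
  | some _, _ => 0

/-- Total utility of follower `p` in the followers' profile `σ`: her (expected)
payoff against the leader (`0` for `a_0`, `uL p a` for a non-`a_0` action `a`)
plus her payoffs against all other followers. -/
noncomputable def totUtil (s r : ℕ) {β : Type} (uL : Fin s → β → ℝ)
    (σ : Fin s → Option β) (p : Fin s) : ℝ :=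
  (match σ p with
    | none => 0
    | some a => uL p a) +
  ∑ q ∈ Finset.univ.erase p, pairPay s r (σ p) (σ q)

/-- NO-instance argument: the all-`a_0` profile is a Nash equilibrium, regardless
of the leader's strategy: each follower gets `(s-1)(r+1)` in it, while any
deviation yields at most `r + 1 < (s-1)(r+1)`. -/
theorem stmt_10 (s r : ℕ) (hs : 3 ≤ s) (hr : 1 ≤ r) (β : Type)
    (uL : Fin s → β → ℝ) (hL : ∀ p a, uL p a ≤ (r : ℝ) + 1) :
    (∀ p : Fin s, totUtil s r uL (fun _ => none) p = ((s : ℝ) - 1) * ((r : ℝ) + 1)) ∧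
    (∀ (p : Fin s) (a : β),
      totUtil s r uL (Function.update (fun _ => none) p (some a)) p ≤ (r : ℝ) + 1) ∧
    ((r : ℝ) + 1 < ((s : ℝ) - 1) * ((r : ℝ) + 1)) ∧
    (∀ (p : Fin s) (a' : Option β),
      totUtil s r uL (Function.update (fun _ => none) p a') p ≤
        totUtil s r uL (fun _ => none) p) := by
  have hcard : ∀ p : Fin s, (Finset.univ.erase p).card = s - 1 := by
    intro p
    rw [Finset.card_erase_of_mem (Finset.mem_univ p), Finset.card_univ, Fintype.card_fin]
  have h1 : ∀ p : Fin s, totUtil s r uL (fun _ => none) p = ((s : ℝ) - 1) * ((r : ℝ) + 1) := by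
    intro p
    simp only [totUtil, pairPay, Finset.sum_const, hcard p, nsmul_eq_mul, zero_add]
    have : ((s - 1 : ℕ) : ℝ) = (s : ℝ) - 1 := by
      have : 1 ≤ s := by omega
      push_cast [this]; ring
    rw [this]
  have h2 : ∀ (p : Fin s) (a : β),
      totUtil s r uL (Function.update (fun _ => none) p (some a)) p ≤ (r : ℝ) + 1 := by
    intro p a
    simp only [totUtil, Function.update_self, pairPay, Finset.sum_const, smul_zero, add_zero]
    exact hL p a
  have h3 : (r : ℝ) + 1 < ((s : ℝ) - 1) * ((r : ℝ) + 1) := by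
    have hr1 : (0 : ℝ) < (r : ℝ) + 1 := by positivity
    have hs2 : (2 : ℝ) ≤ (s : ℝ) - 1 := by
      have : (3 : ℝ) ≤ (s : ℝ) := by exact_mod_cast hs
      linarith
    nlinarith
  refine ⟨h1, h2, h3, ?_⟩
  intro p a'
  cases a' with
  | none =>
    have : Function.update (fun _ : Fin s => (none : Option β)) p none
        = fun _ => none := by
      ext q; by_cases h : q = p <;> simp [h]
    rw [this]
  | some a => rw [h1 p]; exact le_trans (h2 p a) (le_of_lt h3)
end

section
/- In the 3-SAT reduction PG: for s ≥ 3, any followers' action profile in which at least one follower plays some a_p ≠ a_0 and at least one other follower plays a_0 is not a Nash equilibrium, because the follower playing a_p ≠ a_0 gets at most r+1 but deviating to a_0 yields at least ♯_i · 1/(s−1) + ♯_0 · (r+1) > r+1 where ♯_0 ≥ 1 counts the other followers playing a_0 and ♯_i counts the other followers playing actions different from a_0. -/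
/-- Any profile where some follower plays a non-`a_0` action while some other
follower plays `a_0` is not a Nash equilibrium: the former gets at most `r + 1`,
but deviating to `a_0` yields at least `♯_i / (s-1) + ♯_0 (r+1) > r + 1`. -/
theorem stmt_11 (s r : ℕ) (hs : 3 ≤ s) (hr : 1 ≤ r) (β : Type)
    [DecidableEq β]
    (uL : Fin s → β → ℝ) (hL : ∀ p a, uL p a ≤ (r : ℝ) + 1)
    (σ : Fin s → Option β) (p : Fin s) (a : β) (hp : σ p = some a)
    (q' : Fin s) (hq' : q' ≠ p) (hq0 : σ q' = none) :
    totUtil s r uL σ p ≤ (r : ℝ) + 1 ∧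
    totUtil s r uL (Function.update σ p none) p ≥
      (((Finset.univ.erase p).filter (fun q => σ q ≠ none)).card : ℝ) / ((s : ℝ) - 1)
        + (((Finset.univ.erase p).filter (fun q => σ q = none)).card : ℝ) * ((r : ℝ) + 1) ∧
    (((Finset.univ.erase p).filter (fun q => σ q ≠ none)).card : ℝ) / ((s : ℝ) - 1)
        + (((Finset.univ.erase p).filter (fun q => σ q = none)).card : ℝ) * ((r : ℝ) + 1)
      > (r : ℝ) + 1 ∧
    totUtil s r uL σ p < totUtil s r uL (Function.update σ p none) p := by

  classical
  set E := Finset.univ.erase p with hE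
  set N := E.filter (fun q => σ q = none) with hN
  set I := E.filter (fun q => σ q ≠ none) with hI
  have hE_card : E.card = s - 1 := by
    simp [hE, Finset.card_erase_of_mem]
  have hs1 : (1:ℝ) ≤ (s:ℝ) - 1 := by
    have : (3:ℝ) ≤ (s:ℝ) := by exact_mod_cast hs
    linarith
  have hs1' : (0:ℝ) < (s:ℝ) - 1 := by linarith
  -- card sum
  have hcard : N.card + I.card = s - 1 := by
    rw [← hE_card, hN, hI]
    rw [Finset.card_filter_add_card_filter_not (p := fun q => σ q = none)]
  have hcardR : (N.card : ℝ) + (I.card : ℝ) = (s:ℝ) - 1 := by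
    have h1 : ((N.card + I.card : ℕ) : ℝ) = ((s - 1 : ℕ) : ℝ) := by rw [hcard]
    push_cast at h1
    rw [Nat.cast_sub (by omega)] at h1
    push_cast at h1
    linarith
  have hNpos : 1 ≤ N.card := by
    have : q' ∈ N := by
      simp [hN, hE, Finset.mem_erase, hq', hq0]
    exact Finset.card_pos.mpr ⟨q', this⟩
  -- Part 1
  have h1 : totUtil s r uL σ p ≤ (r : ℝ) + 1 := by
    unfold totUtil
    rw [hp]
    have : ∑ q ∈ Finset.univ.erase p, pairPay s r (σ p) (σ q) = 0 := by
      apply Finset.sum_eq_zero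
      intro q _
      rw [hp]; rfl
    rw [hp] at this
    rw [this, add_zero]
    exact hL p a
  -- Part 2 : the updated utility equals the expression
  have h2eq : totUtil s r uL (Function.update σ p none) p =
      (I.card : ℝ) / ((s:ℝ) - 1) + (N.card : ℝ) * ((r:ℝ) + 1) := by
    unfold totUtil
    rw [Function.update_self]
    rw [zero_add]
    have hsplit : (Finset.univ.erase p) = N ∪ I := by
      rw [hN, hI, Finset.filter_union_filter_not_eq]
    rw [hsplit, Finset.sum_union]
    · have hNsum : ∑ q ∈ N, pairPay s r none (Function.update σ p none q) = (N.card : ℝ) * ((r:ℝ)+1) := by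
        rw [Finset.sum_congr rfl (fun q hq => ?_), Finset.sum_const, nsmul_eq_mul]
        have hqp : q ≠ p := by
          simp only [hN, hE, Finset.mem_filter, Finset.mem_erase] at hq
          exact hq.1.1
        rw [Function.update_of_ne hqp]
        have : σ q = none := by
          simp only [hN, Finset.mem_filter] at hq
          exact hq.2
        rw [this]; rfl
      have hIsum : ∑ q ∈ I, pairPay s r none (Function.update σ p none q) = (I.card : ℝ) * (1 / ((s:ℝ)-1)) := by
        rw [Finset.sum_congr rfl (fun q hq => ?_), Finset.sum_const, nsmul_eq_mul]
        have hqp : q ≠ p := by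
          simp only [hI, hE, Finset.mem_filter, Finset.mem_erase] at hq
          exact hq.1.1
        rw [Function.update_of_ne hqp]
        have : σ q ≠ none := by
          simp only [hI, Finset.mem_filter] at hq
          exact hq.2
        obtain ⟨b, hb⟩ := Option.ne_none_iff_exists'.mp this
        rw [hb]; rfl
      rw [hNsum, hIsum]
      ring
    · rw [hN, hI]
      exact Finset.disjoint_filter_filter_not _ _ _
  have h3 : (I.card : ℝ) / ((s:ℝ) - 1) + (N.card : ℝ) * ((r:ℝ) + 1) > (r:ℝ) + 1 := by
    have hNR : (1:ℝ) ≤ (N.card : ℝ) := by exact_mod_cast hNpos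
    have hr1 : (1:ℝ) ≤ (r:ℝ) := by exact_mod_cast hr
    have hIR : (0:ℝ) ≤ (I.card : ℝ) := by positivity
    rcases lt_or_ge (1:ℝ) (N.card : ℝ) with h | h
    · have h2 : (2:ℝ) ≤ (N.card : ℝ) := by
        have : 2 ≤ N.card := by
          by_contra hc
          push_neg at hc
          interval_cases h' : N.card <;> simp_all <;> norm_num at h
        exact_mod_cast this
      nlinarith [div_nonneg hIR hs1'.le]
    · have hNeq : (N.card : ℝ) = 1 := le_antisymm h hNR
      have hIeq : (I.card : ℝ) = (s:ℝ) - 2 := by linarith [hcardR]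
      have : (0:ℝ) < (I.card : ℝ) / ((s:ℝ) - 1) := by
        apply div_pos _ hs1'
        rw [hIeq]
        have : (3:ℝ) ≤ (s:ℝ) := by exact_mod_cast hs
        linarith
      nlinarith
  refine ⟨h1, by rw [h2eq], h3, ?_⟩
  calc totUtil s r uL σ p ≤ (r:ℝ) + 1 := h1
    _ < _ := h3
    _ = totUtil s r uL (Function.update σ p none) p := h2eq.symm
end
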